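/- Let (X,d) be a metric space and endow X×ℝ with the distance d̃((x,t),(y,s)) = sqrt(d(x,y)² + (t−s)²). Let n ≥ 1 be an integer, γ > 0 and Λ ≥ 1. Then there exists δ' > 0, depending only on n, γ and Λ, with the following property. Let μ be a Borel measure on X×ℝ, let Σ' ⊆ Σ ⊆ X×ℝ, let Θ: Σ' → (0,∞) satisfy Θ(p) ≤ Λ·Θ(q) for all p, q ∈ Σ', and let r₀ ∈ (0,1) be such that for every p ∈ Σ' and every r ∈ (0, 2r₀): μ(Σ ∩ B_r(p)) ≥ (1−δ')·Θ(p)·ω_n·rⁿ and μ( (Σ ∩ B_r(p)) ∖ C_γ(p) ) ≤ δ'·Θ(p)·ω_n·rⁿ. Then Σ' ∩ B_{r₀}(p) ⊆ C_{2γ}(p) for every p ∈ Σ'. -/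
import Mathlib


open MeasureTheory Filter Set Metric Topology
open scoped ENNReal NNReal

noncomputable section

/-- `ω_k = π^{k/2} / Γ(1 + k/2)`, the volume of the unit ball of `ℝ^k` for integer `k`. -/
def omegaN (k : ℕ) : ℝ := Real.pi ^ ((k : ℝ) / 2) / Real.Gamma ((k : ℝ) / 2 + 1)

/-- The ℓ² product distance on `X × ℝ`:
`d̃((x,t),(y,s)) = sqrt(d(x,y)² + (t−s)²)`. -/
def dist2 {X : Type*} [PseudoMetricSpace X] (p q : X × ℝ) : ℝ :=
  Real.sqrt (dist p.1 q.1 ^ 2 + (p.2 - q.2) ^ 2)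

/-- Balls in `X × ℝ` with respect to the ℓ² product distance. -/
def ball2 {X : Type*} [PseudoMetricSpace X] (p : X × ℝ) (r : ℝ) : Set (X × ℝ) :=
  {q | dist2 p q < r}

/-- The cone `C_γ(p) = {(y,s) ∈ X × ℝ : γ·d(y,x) ≥ |s − t|}` for `p = (x,t)`. -/
def cone {X : Type*} [PseudoMetricSpace X] (γ : ℝ) (p : X × ℝ) : Set (X × ℝ) :=
  {q | |q.2 - p.2| ≤ γ * dist q.1 p.1}

lemma omegaN_pos (k : ℕ) : 0 < omegaN k := by
  unfold omegaN
  apply div_pos (Real.rpow_pos_of_pos Real.pi_pos _)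
  apply Real.Gamma_pos_of_pos
  positivity

lemma abs_sub_snd_le_dist2 {X : Type*} [PseudoMetricSpace X] (p q : X × ℝ) :
    |p.2 - q.2| ≤ dist2 p q := by
  rw [dist2, ← Real.sqrt_sq_eq_abs]
  exact Real.sqrt_le_sqrt (by nlinarith [sq_nonneg (dist p.1 q.1)])

lemma dist_fst_le_dist2 {X : Type*} [PseudoMetricSpace X] (p q : X × ℝ) :
    dist p.1 q.1 ≤ dist2 p q := by
  calc dist p.1 q.1 = Real.sqrt (dist p.1 q.1 ^ 2) :=
        (Real.sqrt_sq (dist_nonneg (x := p.1) (y := q.1))).symm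
    _ ≤ dist2 p q := Real.sqrt_le_sqrt (by nlinarith [sq_nonneg (p.2 - q.2)])

lemma sqrt_add_sq_le (a b c d : ℝ) (ha : 0 ≤ a) (hc : 0 ≤ c) :
    Real.sqrt ((a + c) ^ 2 + (b + d) ^ 2)
      ≤ Real.sqrt (a ^ 2 + b ^ 2) + Real.sqrt (c ^ 2 + d ^ 2) := by
  have h1 : 0 ≤ Real.sqrt (a ^ 2 + b ^ 2) := Real.sqrt_nonneg _
  have h2 : 0 ≤ Real.sqrt (c ^ 2 + d ^ 2) := Real.sqrt_nonneg _
  have hs1 : Real.sqrt (a ^ 2 + b ^ 2) ^ 2 = a ^ 2 + b ^ 2 := Real.sq_sqrt (by positivity)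
  have hs2 : Real.sqrt (c ^ 2 + d ^ 2) ^ 2 = c ^ 2 + d ^ 2 := Real.sq_sqrt (by positivity)
  have key : a * c + b * d ≤ Real.sqrt (a ^ 2 + b ^ 2) * Real.sqrt (c ^ 2 + d ^ 2) := by
    rcases le_or_gt (a * c + b * d) 0 with h | h
    · exact h.trans (by positivity)
    · have hsq : (a * c + b * d) ^ 2 ≤ (a ^ 2 + b ^ 2) * (c ^ 2 + d ^ 2) := by
        nlinarith [sq_nonneg (a * d - b * c)]
      have hprod : (Real.sqrt (a ^ 2 + b ^ 2) * Real.sqrt (c ^ 2 + d ^ 2)) ^ 2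
          = (a ^ 2 + b ^ 2) * (c ^ 2 + d ^ 2) := by rw [mul_pow, hs1, hs2]
      nlinarith [mul_nonneg h1 h2, hprod, hsq]
  have : (a + c) ^ 2 + (b + d) ^ 2
      ≤ (Real.sqrt (a ^ 2 + b ^ 2) + Real.sqrt (c ^ 2 + d ^ 2)) ^ 2 := by nlinarith
  calc Real.sqrt ((a + c) ^ 2 + (b + d) ^ 2)
      ≤ Real.sqrt ((Real.sqrt (a ^ 2 + b ^ 2) + Real.sqrt (c ^ 2 + d ^ 2)) ^ 2) :=
        Real.sqrt_le_sqrt this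
    _ = _ := Real.sqrt_sq (by positivity)

lemma dist2_triangle {X : Type*} [PseudoMetricSpace X] (p q z : X × ℝ) :
    dist2 p z ≤ dist2 p q + dist2 q z := by
  have h := sqrt_add_sq_le (dist p.1 q.1) (p.2 - q.2) (dist q.1 z.1) (q.2 - z.2)
    dist_nonneg dist_nonneg
  refine le_trans ?_ h
  unfold dist2
  apply Real.sqrt_le_sqrt
  have ht := dist_triangle p.1 q.1 z.1
  have hnn : (0:ℝ) ≤ dist p.1 z.1 := dist_nonneg
  have heq : p.2 - z.2 = (p.2 - q.2) + (q.2 - z.2) := by ring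
  rw [heq]
  nlinarith [dist_nonneg (x := p.1) (y := q.1), dist_nonneg (x := q.1) (y := z.1)]

set_option maxHeartbeats 1000000 in
/-- For every `n ≥ 1`, `γ > 0` and `Λ ≥ 1` there exists `δ' > 0`,
depending only on `n`, `γ` and `Λ`, with the following property. If `μ` is a Borel measure
on `X × ℝ`, `Σ' ⊆ Σ ⊆ X × ℝ`, `Θ : Σ' → (0,∞)` satisfies `Θ(p) ≤ Λ·Θ(q)` on `Σ'`, and
`r₀ ∈ (0,1)` is such that for every `p ∈ Σ'` and `r ∈ (0,2r₀)` one has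
`μ(Σ ∩ B_r(p)) ≥ (1−δ')·Θ(p)·ω_n·rⁿ` and `μ((Σ ∩ B_r(p)) ∖ C_γ(p)) ≤ δ'·Θ(p)·ω_n·rⁿ`,
then `Σ' ∩ B_{r₀}(p) ⊆ C_{2γ}(p)` for every `p ∈ Σ'`. -/
theorem statement9 (n : ℕ) (hn : 1 ≤ n) (γ Λ : ℝ) (hγ : 0 < γ) (hΛ : 1 ≤ Λ) :
    ∃ δ' : ℝ, 0 < δ' ∧
      ∀ (X : Type) (_ : MetricSpace X) (_ : MeasurableSpace X) (_ : BorelSpace X)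
        (μ : Measure (X × ℝ)) (S' S : Set (X × ℝ)), S' ⊆ S →
        ∀ Θ : X × ℝ → ℝ, (∀ p ∈ S', 0 < Θ p) →
        (∀ p ∈ S', ∀ q ∈ S', Θ p ≤ Λ * Θ q) →
        ∀ r₀ : ℝ, r₀ ∈ Set.Ioo (0 : ℝ) 1 →
        (∀ p ∈ S', ∀ r : ℝ, 0 < r → r < 2 * r₀ →
          ENNReal.ofReal ((1 - δ') * Θ p * omegaN n * r ^ n) ≤ μ (S ∩ ball2 p r) ∧
          μ ((S ∩ ball2 p r) \ cone γ p) ≤ ENNReal.ofReal (δ' * Θ p * omegaN n * r ^ n)) →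
        ∀ p ∈ S', S' ∩ ball2 p r₀ ⊆ cone (2 * γ) p := by
  have hω : 0 < omegaN n := omegaN_pos n
  set M : ℝ := Real.sqrt (1 + 1 / (4 * γ ^ 2)) with hMdef
  have hM : 1 ≤ M := by
    have h1 : Real.sqrt 1 ≤ M := Real.sqrt_le_sqrt (le_add_of_nonneg_right (by positivity))
    simpa using h1
  set K : ℝ := (8 * M * (1 + γ)) ^ n with hKdef
  have hK : 1 ≤ K := one_le_pow₀ (by nlinarith)
  have hden : (0:ℝ) < 1 + 2 * Λ * K := by nlinarith
  refine ⟨1 / (1 + 2 * Λ * K), one_div_pos.mpr hden, ?_⟩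
  set δ' : ℝ := 1 / (1 + 2 * Λ * K) with hδdef
  have hδ0 : 0 < δ' := by rw [hδdef]; exact one_div_pos.mpr hden
  have hΛK0 : 0 < Λ * K := by nlinarith
  have hδK : δ' * (Λ * K) < 1 - δ' := by
    have hδ1 : δ' * (1 + 2 * Λ * K) = 1 := by
      rw [hδdef]; field_simp
    nlinarith [mul_pos hδ0 hΛK0]
  intro X _ _ _ μ S' S hSS Θ hΘpos hΘΛ r₀ hr₀ hyp p hp q hq
  obtain ⟨hqS', hqb⟩ := hq
  by_contra hcon
  simp only [cone, mem_setOf_eq, not_le] at hcon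
  -- hcon : 2 * γ * dist q.1 p.1 < |q.2 - p.2|
  set T : ℝ := |q.2 - p.2| with hTdef
  set d : ℝ := dist q.1 p.1 with hddef
  have hd0 : 0 ≤ d := dist_nonneg
  have hT : 0 < T := lt_of_le_of_lt (by positivity) hcon
  set D : ℝ := dist2 p q with hDdef
  have hqb' : D < r₀ := hqb
  have hTD : T ≤ D := by
    have := abs_sub_snd_le_dist2 p q
    rw [abs_sub_comm] at this
    exact this
  have hDM : D ≤ M * T := by
    have hd2 : d ^ 2 ≤ T ^ 2 / (4 * γ ^ 2) := by
      rw [le_div_iff₀ (by positivity)]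
      have hsq := mul_self_le_mul_self (by positivity : (0:ℝ) ≤ 2 * γ * d) hcon.le
      nlinarith
    have : D ≤ Real.sqrt ((1 + 1 / (4 * γ ^ 2)) * T ^ 2) := by
      rw [hDdef, dist2]
      apply Real.sqrt_le_sqrt
      have h1 : dist p.1 q.1 = d := dist_comm p.1 q.1
      have h2 : (p.2 - q.2) ^ 2 = T ^ 2 := by
        rw [hTdef, sq_abs]; ring
      rw [h1, h2]
      have hexp : (1 + 1 / (4 * γ ^ 2)) * T ^ 2 = T ^ 2 + T ^ 2 / (4 * γ ^ 2) := by ring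
      linarith
    rwa [Real.sqrt_mul (by positivity), Real.sqrt_sq hT.le, ← hMdef] at this
  set ρ : ℝ := T / (4 * (1 + γ)) with hρdef
  have hρ0 : 0 < ρ := by positivity
  have hρT : (1 + γ) * ρ = T / 4 := by
    rw [hρdef]; field_simp
  have hρleT : ρ ≤ T := by nlinarith
  have hρD : ρ ≤ D := hρleT.trans hTD
  have hr₀0 : 0 < r₀ := hr₀.1
  have hρ2 : ρ < 2 * r₀ := by linarith
  set r : ℝ := D + ρ with hrdef
  have hr0 : 0 < r := by
    have : 0 ≤ D := Real.sqrt_nonneg _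
    linarith
  have hr2 : r < 2 * r₀ := by linarith
  -- Subset claim
  have hsub : S ∩ ball2 q ρ ⊆ (S ∩ ball2 p r) \ cone γ p := by
    rintro z ⟨hzS, hzb⟩
    simp only [ball2, mem_setOf_eq] at hzb
    have hz2 : |q.2 - z.2| ≤ dist2 q z := abs_sub_snd_le_dist2 q z
    have hz1 : dist q.1 z.1 ≤ dist2 q z := dist_fst_le_dist2 q z
    have hdz0 : 0 ≤ dist2 q z := Real.sqrt_nonneg _
    refine ⟨⟨hzS, ?_⟩, ?_⟩
    · have htri := dist2_triangle p q z
      simp only [ball2, mem_setOf_eq]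
      rw [hrdef]
      calc dist2 p z ≤ dist2 p q + dist2 q z := htri
        _ < D + ρ := by rw [← hDdef]; linarith
    · simp only [cone, mem_setOf_eq, not_le]
      -- goal : γ * dist z.1 p.1 < |z.2 - p.2|
      have h1 : dist z.1 p.1 ≤ dist2 q z + d := by
        calc dist z.1 p.1 ≤ dist z.1 q.1 + dist q.1 p.1 := dist_triangle _ _ _
          _ = dist q.1 z.1 + d := by rw [dist_comm z.1 q.1, hddef]
          _ ≤ dist2 q z + d := by linarith
      have h2 : T ≤ |q.2 - z.2| + |z.2 - p.2| := by
        rw [hTdef]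
        exact abs_sub_le q.2 z.2 p.2
      have h3 : γ * dist z.1 p.1 ≤ γ * (dist2 q z + d) :=
        mul_le_mul_of_nonneg_left h1 hγ.le
      have h4 : γ * dist2 q z < γ * ρ := mul_lt_mul_of_pos_left hzb hγ
      -- γ * dist z.1 p.1 < γρ + γd < γρ + T/2 ≤ T - ρ < |z.2 - p.2|
      have h5 : 2 * γ * d < T := hcon
      nlinarith
  -- Measure chain
  obtain ⟨hq1, -⟩ := hyp q hqS' ρ hρ0 hρ2
  obtain ⟨-, hp2⟩ := hyp p hp r hr0 hr2
  have hmono : μ (S ∩ ball2 q ρ) ≤ μ ((S ∩ ball2 p r) \ cone γ p) := measure_mono hsub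
  have hΘp : 0 < Θ p := hΘpos p hp
  have hΘq : 0 < Θ q := hΘpos q hqS'
  have hB : 0 ≤ δ' * Θ p * omegaN n * r ^ n := by positivity
  have hreal : (1 - δ') * Θ q * omegaN n * ρ ^ n ≤ δ' * Θ p * omegaN n * r ^ n :=
    (ENNReal.ofReal_le_ofReal_iff hB).mp (hq1.trans (hmono.trans hp2))
  -- r^n ≤ K ρ^n
  have hrρ : r ≤ 8 * M * (1 + γ) * ρ := by
    have hT4 : T = 4 * (1 + γ) * ρ := by
      rw [hρdef]; field_simp
    have : r ≤ 2 * D := by rw [hrdef]; linarith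
    calc r ≤ 2 * D := this
      _ ≤ 2 * (M * T) := by linarith
      _ = 8 * M * (1 + γ) * ρ := by rw [hT4]; ring
  have hrK : r ^ n ≤ K * ρ ^ n := by
    calc r ^ n ≤ (8 * M * (1 + γ) * ρ) ^ n := pow_le_pow_left₀ hr0.le hrρ n
      _ = K * ρ ^ n := by rw [hKdef, mul_pow]
  have hΘpq : Θ p ≤ Λ * Θ q := hΘΛ p hp q hqS'
  have hΛ0 : 0 < Λ := lt_of_lt_of_le one_pos hΛ
  have hρn : 0 < ρ ^ n := pow_pos hρ0 n
  -- final contradiction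
  have hfin : δ' * Θ p * omegaN n * r ^ n < (1 - δ') * Θ q * omegaN n * ρ ^ n := by
    calc δ' * Θ p * omegaN n * r ^ n
        ≤ δ' * (Λ * Θ q) * omegaN n * (K * ρ ^ n) := by
          apply mul_le_mul
          · apply mul_le_mul_of_nonneg_right _ hω.le
            exact mul_le_mul_of_nonneg_left hΘpq hδ0.le
          · exact hrK
          · positivity
          · positivity
      _ = (δ' * (Λ * K)) * (Θ q * omegaN n * ρ ^ n) := by ring
      _ < (1 - δ') * (Θ q * omegaN n * ρ ^ n) := by
          apply mul_lt_mul_of_pos_right hδK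
          positivity
      _ = (1 - δ') * Θ q * omegaN n * ρ ^ n := by ring
  linarith

end
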